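/- arXiv:2501.15507 — 8 statements merged into one kernel-verified Lean document; each statement's English description precedes it below -/
import Mathlib

section
/- If a Kripke frame F for intuitionistic predicate logic validates the Constant Domain principle CD (for all interpretations of the predicate symbols), then F has constant domains, i.e., whenever w ≼ w' we have D_w = D_{w'}. -/
/-- A Kripke frame for intuitionistic predicate logic: a partially ordered
set of worlds `W` together with nonempty, monotonically increasing domains
`D w ⊆ U`. -/
structure KFrame (W U : Type) where
  le : W → W → Prop
  le_refl : ∀ w, le w w
  le_trans : ∀ {u v w}, le u v → le v w → le u w
  le_antisymm : ∀ {u v}, le u v → le v u → u = v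
  D : W → Set U
  D_nonempty : ∀ w, (D w).Nonempty
  D_mono : ∀ {v w}, le v w → D v ⊆ D w

namespace KFrame

variable {W U : Type} (F : KFrame W U)

/-- A persistent interpretation of a unary predicate (equivalently, the
forcing of a formula `A(x)` with one free variable): it respects the domains
and is monotone along the accessibility relation. -/
def Persistent1 (A : W → U → Prop) : Prop :=
  (∀ w d, A w d → d ∈ F.D w) ∧ ∀ v w d, F.le v w → A v d → A w d

/-- A persistent interpretation of a nullary predicate (equivalently, the
forcing of a formula `B` in which `x` is not free). -/
def Persistent0 (B : W → Prop) : Prop :=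
  ∀ v w, F.le v w → B v → B w

/-- Forcing, at world `w`, of the Constant Domain principle
`(∀x (A(x) ∨ B)) → (∀x A(x) ∨ B)` (`x` not free in `B`), with the Kripke
forcing clauses unfolded. -/
def ForcesCD (A : W → U → Prop) (B : W → Prop) (w : W) : Prop :=
  ∀ v, F.le w v →
    (∀ u, F.le v u → ∀ d ∈ F.D u, A u d ∨ B u) →
    ((∀ u, F.le v u → ∀ d ∈ F.D u, A u d) ∨ B v)

/-- Forcing, at world `w`, of the Existential Distribution principle
`(B → ∃x A(x)) → ∃x (B → A(x))` (`x` not free in `B`). -/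
def ForcesED (A : W → U → Prop) (B : W → Prop) (w : W) : Prop :=
  ∀ v, F.le w v →
    (∀ u, F.le v u → B u → ∃ d ∈ F.D u, A u d) →
    ∃ d ∈ F.D v, ∀ u, F.le v u → B u → A u d

/-- Forcing, at world `w`, of the Quantifier Switch principle
`(∀x A(x) → B) → ∃x (A(x) → B)` (`x` not free in `B`). -/
def ForcesSW (A : W → U → Prop) (B : W → Prop) (w : W) : Prop :=
  ∀ v, F.le w v →
    (∀ u, F.le v u → (∀ u', F.le u u' → ∀ d ∈ F.D u', A u' d) → B u) →
    ∃ d ∈ F.D v, ∀ u, F.le v u → A u d → B u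

/-- The frame validates the scheme `CD`, i.e. every instance holds at every
world in every Kripke model based on the frame. -/
def ValidCD : Prop :=
  ∀ A B, F.Persistent1 A → F.Persistent0 B → ∀ w, F.ForcesCD A B w

/-- The frame validates the scheme `ED`. -/
def ValidED : Prop :=
  ∀ A B, F.Persistent1 A → F.Persistent0 B → ∀ w, F.ForcesED A B w

/-- The frame validates the scheme `SW`. -/
def ValidSW : Prop :=
  ∀ A B, F.Persistent1 A → F.Persistent0 B → ∀ w, F.ForcesSW A B w

/-- The frame has constant domains. -/
def ConstantDomain : Prop := ∀ {v w}, F.le v w → F.D v = F.D w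

/-- The frame is linear: any two worlds above a common world are comparable. -/
def Linear : Prop := ∀ u v w, F.le w u → F.le w v → (F.le u v ∨ F.le v u)

/-- Condition `WF`: for every world `w` the upward cone `{v | w ≼ v}` is
well-founded under `≼` (no infinite strictly descending chains). -/
def UpsetWF : Prop :=
  ∀ w, Set.WellFoundedOn {v | F.le w v} (fun a b => F.le a b ∧ a ≠ b)

/-- Condition `cWF`: for every world `w` the upward cone `{v | w ≼ v}` is
conversely well-founded under `≼` (no infinite strictly ascending chains). -/
def UpsetCWF : Prop :=
  ∀ w, Set.WellFoundedOn {v | F.le w v} (fun a b => F.le b a ∧ a ≠ b)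

end KFrame

/-- If a Kripke frame validates the Constant Domain
principle `CD` (for all interpretations of the predicate symbols), then it
has constant domains. -/
theorem constantDomain_of_validCD {W U : Type} (F : KFrame W U)
    (h : F.ValidCD) : F.ConstantDomain := by
  intro v w hvw
  apply Set.Subset.antisymm (F.D_mono hvw)
  intro d hd
  have hP : F.Persistent1 (fun u e => e ∈ F.D u ∧ e ≠ d) := by
    constructor
    · intro u e he; exact he.1
    · intro a b e hab he; exact ⟨F.D_mono hab he.1, he.2⟩
  have hB : F.Persistent0 (fun u => d ∈ F.D u) := by
    intro a b hab h'; exact F.D_mono hab h'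
  have := h _ _ hP hB v v (F.le_refl v)
    (by intro u hu e heD
        by_cases hed : e = d
        · exact Or.inr (hed ▸ heD)
        · exact Or.inl ⟨heD, hed⟩)
  rcases this with h1 | h2
  · exact absurd rfl (h1 w hvw d hd).2
  · exact h2
end

section
/- If a Kripke frame F for intuitionistic predicate logic validates the Existential Distribution principle ED, then F has constant domains. -/
/-- If a Kripke frame validates the Existential
Distribution principle `ED`, then it has constant domains. -/
theorem constantDomain_of_validED {W U : Type} (F : KFrame W U)
    (h : F.ValidED) : F.ConstantDomain := by
  intro v w hvw
  apply Set.Subset.antisymm (F.D_mono hvw)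
  intro a haw
  have hP : F.Persistent1 (fun u d => F.le w u ∧ d = a) := by
    constructor
    · rintro u d ⟨hu, rfl⟩; exact F.D_mono hu haw
    · rintro x y d hxy ⟨hx, rfl⟩; exact ⟨F.le_trans hx hxy, rfl⟩
  have hB : F.Persistent0 (fun u => F.le w u) := fun x y hxy hx => F.le_trans hx hxy
  obtain ⟨d, hd, hall⟩ := h _ _ hP hB v v (F.le_refl v)
    (fun u hu hwu => ⟨a, F.D_mono hwu haw, hwu, rfl⟩)
  have := hall w hvw (F.le_refl w)
  rw [this.2] at hd
  exact hd
end

section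
/- If a Kripke frame F for intuitionistic predicate logic validates the Quantifier Switch principle SW, then F has constant domains. -/
/-- If a Kripke frame validates the Quantifier Switch
principle `SW`, then it has constant domains. -/
theorem constantDomain_of_validSW {W U : Type} (F : KFrame W U)
    (h : F.ValidSW) : F.ConstantDomain := by
  intro v w hvw
  apply Set.Subset.antisymm (F.D_mono hvw)
  intro d hd
  set A : W → U → Prop := fun u e => e ∈ F.D u ∧ (e = d → ¬ F.le u w) with hA
  set B : W → Prop := fun u => ¬ F.le u w with hB
  have hPA : F.Persistent1 A := by
    constructor
    · intro u e he; exact he.1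
    · intro u u' e huu' ⟨he, hed⟩
      exact ⟨F.D_mono huu' he, fun h1 h2 => hed h1 (F.le_trans huu' h2)⟩
  have hPB : F.Persistent0 B := by
    intro u u' huu' hb h2
    exact hb (F.le_trans huu' h2)
  have hsw := h A B hPA hPB v v (F.le_refl v)
  have hpre : ∀ u, F.le v u →
      (∀ u', F.le u u' → ∀ e ∈ F.D u', A u' e) → B u := by
    intro u hvu hall huw
    have := hall w (F.le_trans huw (F.le_refl w)) d hd
    exact this.2 rfl (F.le_refl w)
  obtain ⟨e, heD, he⟩ := hsw hpre
  by_cases hed : e = d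
  · exact hed ▸ heD
  · exact absurd hvw (he v (F.le_refl v) ⟨heD, fun h1 => absurd h1 hed⟩)
end

section
/- Every linear constant-domain Kripke frame whose (common) domain is finite validates CD, ED, and SW. -/
/-!
Constant domains alone give `CD`: if `B` fails at `v`, then `A(d) ∨ B` at `v` yields `A(d)` at `v`
for every `d` of the common domain, and `A(d)` persists upwards.

For `ED` and `SW` argue by contradiction: every one of the finitely many `d ∈ D v` has a world
above `v` refuting the instance of the conclusion at `d`, and by linearity these worlds form a
finite chain. For `ED`, the least of them forces `B`, hence some `A(e)`, which persists to the world
refuting `e`. For `SW`, the greatest of them forces `∀x A(x)`, since every `A(e)` holds there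
already, hence `B`, contradicting its choice.
-/

theorem IsChain.exists_forall_rel_of_finite {α : Type*} {r : α → α → Prop}
    (hrefl : ∀ a, r a a) (htrans : ∀ {a b c}, r a b → r b c → r a c) {S : Set α}
    (hS : S.Finite) (hne : S.Nonempty) (hchain : IsChain r S) : ∃ m ∈ S, ∀ a ∈ S, r m a := by
  induction S, hS using Set.Finite.induction_on with
  | empty => exact absurd hne Set.not_nonempty_empty
  | @insert b S _ _ ih =>
    rcases S.eq_empty_or_nonempty with rfl | hSne
    · refine ⟨b, Set.mem_insert b ∅, ?_⟩
      rintro a (rfl | ha)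
      exacts [hrefl a, ha.elim]
    obtain ⟨m, hmS, hm⟩ := ih hSne (hchain.mono (Set.subset_insert b S))
    have hbm : r b m ∨ r m b := by
      rcases eq_or_ne b m with rfl | hne
      · exact .inl (hrefl b)
      · exact hchain (.inl rfl) (.inr hmS) hne
    rcases hbm with hbm | hmb
    · exact ⟨b, .inl rfl, by
        rintro a (rfl | ha)
        exacts [hrefl a, htrans hbm (hm a ha)]⟩
    · exact ⟨m, .inr hmS, by
        rintro a (rfl | ha)
        exacts [hmb, hm a ha]⟩

namespace KFrame

variable {W U : Type} {F : KFrame W U}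

theorem Linear.isChain (hlin : F.Linear) {v : W} {S : Set W} (hS : ∀ u ∈ S, F.le v u) :
    IsChain F.le S :=
  fun a ha b hb _ => hlin a b v (hS a ha) (hS b hb)

theorem Linear.exists_min_of_finite {ι : Type} [Finite ι] [Nonempty ι] (hlin : F.Linear) {v : W}
    (f : ι → W) (hf : ∀ i, F.le v (f i)) : ∃ i, ∀ j, F.le (f i) (f j) := by
  obtain ⟨_, ⟨i, rfl⟩, hi⟩ := IsChain.exists_forall_rel_of_finite F.le_refl F.le_trans
    (Set.finite_range f) (Set.range_nonempty f) (hlin.isChain (Set.forall_mem_range.mpr hf))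
  exact ⟨i, fun j => hi (f j) ⟨j, rfl⟩⟩

theorem Linear.exists_max_of_finite {ι : Type} [Finite ι] [Nonempty ι] (hlin : F.Linear) {v : W}
    (f : ι → W) (hf : ∀ i, F.le v (f i)) : ∃ i, ∀ j, F.le (f j) (f i) := by
  obtain ⟨_, ⟨i, rfl⟩, hi⟩ := IsChain.exists_forall_rel_of_finite (r := flip F.le) F.le_refl
    (fun hab hbc => F.le_trans hbc hab) (Set.finite_range f) (Set.range_nonempty f)
    (hlin.isChain (Set.forall_mem_range.mpr hf)).symm
  exact ⟨i, fun j => hi (f j) ⟨j, rfl⟩⟩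

theorem validCD_of_constantDomain (hcd : F.ConstantDomain) : F.ValidCD := by
  intro A B hA _ w v _ h
  by_cases hB : B v
  · exact .inr hB
  refine .inl fun u hvu d hd => ?_
  have hdv : d ∈ F.D v := hcd hvu ▸ hd
  exact (h v (F.le_refl v) d hdv).elim (hA.2 v u d hvu) (absurd · hB)

theorem validED_of_linear_of_constantDomain_of_finite (hlin : F.Linear) (hcd : F.ConstantDomain)
    (hfin : ∀ w, (F.D w).Finite) : F.ValidED := by
  intro A B hA _ w v _ h
  by_contra! hrefuted
  choose u hvu hBu hAu using hrefuted
  have := (hfin v).to_subtype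
  have := (F.D_nonempty v).to_subtype
  obtain ⟨⟨d, hd⟩, hmin⟩ :=
    hlin.exists_min_of_finite (fun e : F.D v => u e e.2) (fun e => hvu e e.2)
  obtain ⟨e, he, hAe⟩ := h _ (hvu d hd) (hBu d hd)
  have hev : e ∈ F.D v := hcd (hvu d hd) ▸ he
  exact hAu e hev (hA.2 _ _ e (hmin ⟨e, hev⟩) hAe)

theorem validSW_of_linear_of_constantDomain_of_finite (hlin : F.Linear) (hcd : F.ConstantDomain)
    (hfin : ∀ w, (F.D w).Finite) : F.ValidSW := by
  intro A B hA _ w v _ h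
  by_contra! hrefuted
  choose u hvu hAu hBu using hrefuted
  have := (hfin v).to_subtype
  have := (F.D_nonempty v).to_subtype
  obtain ⟨⟨d, hd⟩, hmax⟩ :=
    hlin.exists_max_of_finite (fun e : F.D v => u e e.2) (fun e => hvu e e.2)
  refine hBu d hd (h _ (hvu d hd) fun u' hu' e he => ?_)
  have hev : e ∈ F.D v := hcd (F.le_trans (hvu d hd) hu') ▸ he
  exact hA.2 _ _ e (F.le_trans (hmax ⟨e, hev⟩) hu') (hAu e hev)

end KFrame

/-- Every linear constant-domain Kripke frame whose
(common) domain is finite validates `CD`, `ED` and `SW`. -/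
theorem shifts_valid_of_linear_constant_finite {W U : Type} (F : KFrame W U)
    (hlin : F.Linear) (hcd : F.ConstantDomain)
    (hfin : ∀ w, (F.D w).Finite) :
    F.ValidCD ∧ F.ValidED ∧ F.ValidSW :=
  ⟨KFrame.validCD_of_constantDomain hcd,
    KFrame.validED_of_linear_of_constantDomain_of_finite hlin hcd hfin,
    KFrame.validSW_of_linear_of_constantDomain_of_finite hlin hcd hfin⟩
end

section
/- If F is a linear constant-domain Kripke frame such that for every world w the upward cone {v : v ≽ w} is well-founded under ≼ (no infinite strictly descending chains), then F validates the Existential Distribution principle ED. -/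
/-- If `F` is a linear constant-domain Kripke frame such
that for every world `w` the upward cone `{v | v ≽ w}` is well-founded under
`≼`, then `F` validates the Existential Distribution principle `ED`. -/
theorem validED_of_linear_constant_WF {W U : Type} (F : KFrame W U)
    (hlin : F.Linear) (hcd : F.ConstantDomain) (hwf : F.UpsetWF) :
    F.ValidED := by
  rintro A B ⟨hAdom, hApers⟩ hBpers w v hwv hant
  by_cases hB : ∃ u, F.le v u ∧ B u
  · obtain ⟨u, hvu, hBu⟩ := hB
    have key : ∀ x, x ∈ {x | F.le v x} → B x →
        ∃ d ∈ F.D v, ∀ u', F.le v u' → B u' → A u' d := by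
      intro x hx
      refine Set.WellFoundedOn.induction (hwf v) hx
        (P := fun x => B x → ∃ d ∈ F.D v, ∀ u', F.le v u' → B u' → A u' d) ?_
      intro y hy IH hBy
      by_cases hmin : ∃ z, F.le v z ∧ B z ∧ F.le z y ∧ z ≠ y
      · obtain ⟨z, h1, h2, h3, h4⟩ := hmin
        exact IH z h1 ⟨h3, h4⟩ h2
      · push_neg at hmin
        obtain ⟨d, hd, hAd⟩ := hant y hy hBy
        refine ⟨d, (hcd hy) ▸ hd, ?_⟩
        intro u' hvu' hBu'
        rcases hlin y u' v hy hvu' with h | h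
        · exact hApers y u' d h hAd
        · rcases eq_or_ne u' y with rfl | hne
          · exact hAd
          · exact absurd (hmin u' hvu' hBu' h) hne
    exact key u hvu hBu
  · push_neg at hB
    obtain ⟨d, hd⟩ := F.D_nonempty v
    exact ⟨d, hd, fun u' h1 h2 => absurd h2 (hB u' h1)⟩
end

section
/- If F is a linear constant-domain Kripke frame such that for every world w the upward cone {v : v ≽ w} is conversely well-founded (no infinite strictly ascending chains), then F validates the Quantifier Switch principle SW. -/
/-- If `F` is a linear constant-domain Kripke frame such
that for every world `w` the upward cone `{v | v ≽ w}` is conversely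
well-founded (no infinite strictly ascending chains), then `F` validates the
Quantifier Switch principle `SW`. -/
theorem validSW_of_linear_constant_cWF {W U : Type} (F : KFrame W U)
    (hlin : F.Linear) (hcd : F.ConstantDomain) (hcwf : F.UpsetCWF) :
    F.ValidSW := by
  intro A B hA hB w v hwv H
  by_cases hall : ∀ u, F.le v u → ∀ d ∈ F.D u, A u d
  · obtain ⟨d, hd⟩ := F.D_nonempty v
    exact ⟨d, hd, fun u hu _ => hB v u hu (H v (F.le_refl v) fun u' h' => hall u' h')⟩
  · push_neg at hall
    obtain ⟨u0, hu0, d0, hd0, hna0⟩ := hall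
    have hT : ({u : {x // x ∈ {v' | F.le v v'}} | ∃ d ∈ F.D u.1, ¬ A u.1 d}).Nonempty :=
      ⟨⟨u0, hu0⟩, d0, hd0, hna0⟩
    obtain ⟨m, hmT, hmin⟩ := (hcwf v).has_min _ hT
    obtain ⟨d, hdm, hnad⟩ := hmT
    have hvm : F.le v m.1 := m.2
    have hdv : d ∈ F.D v := by rw [hcd hvm]; exact hdm
    refine ⟨d, hdv, fun u hu hAud => ?_⟩
    rcases hlin u m.1 v hu hvm with hum | hmu
    · exact absurd (hA.2 u m.1 d hum hAud) hnad
    · refine H u hu ?_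
      intro u' hu' e he
      by_contra hne
      have hvu' : F.le v u' := F.le_trans hu hu'
      refine hmin ⟨u', hvu'⟩ ⟨e, he, hne⟩ ⟨F.le_trans hmu hu', ?_⟩
      intro heq
      exact hnad (heq ▸ hA.2 u u' d hu' hAud)
end

section
/- There exists a Kripke model on the frame consisting of a root w below an infinite descending chain v0 ≽ v1 ≽ v2 ≽ …, with constant countably infinite domain {a0, a1, …}, that refutes an instance of ED at the root: the model forces Q → ∃x P(x) at w but does not force ∃x (Q → P(x)) at w. -/
/-- There is a Kripke model on the frame consisting of a
root `w` (encoded `none`) below an infinite descending chain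
`v₀ ≽ v₁ ≽ v₂ ≽ …` (encoded `some i`, where `some i ≼ some j ↔ j ≤ i`), with
constant countably infinite domain `ℕ`, that refutes an instance of `ED` at
the root: with `Q` forced exactly at the worlds `v_i`, all `P(d)` forced at
`v₀` and exactly `P(d)` for `d ∉ {a₀, …, a_{i−1}}` forced at `v_i`, the model
forces `Q → ∃x P(x)` at the root but does not force `∃x (Q → P(x))` there. -/
theorem ED_refuted_on_infinite_descending_chain :
    ∃ (F : KFrame (Option ℕ) ℕ) (P : Option ℕ → ℕ → Prop)
      (Q : Option ℕ → Prop),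
      (∀ u v, F.le u v ↔ (u = none ∨ ∃ i j, u = some i ∧ v = some j ∧ j ≤ i)) ∧
      (∀ w, F.D w = Set.univ) ∧
      F.Persistent1 P ∧ F.Persistent0 Q ∧
      (∀ i d, P (some i) d ↔ i ≤ d) ∧ (∀ d, ¬ P none d) ∧
      (∀ u, Q u ↔ u ≠ none) ∧
      -- the root forces `Q → ∃x P(x)` …
      (∀ u, F.le none u → Q u → ∃ d ∈ F.D u, P u d) ∧
      -- … but does not force `∃x (Q → P(x))`.
      ¬ ∃ d ∈ F.D (none : Option ℕ), ∀ u, F.le none u → Q u → P u d := by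
  refine ⟨{ le := fun u v => u = none ∨ ∃ i j, u = some i ∧ v = some j ∧ j ≤ i
            le_refl := fun w => by cases w with
              | none => exact Or.inl rfl
              | some i => exact Or.inr ⟨i, i, rfl, rfl, le_rfl⟩
            le_trans := by
              rintro u v w (rfl | ⟨i, j, rfl, rfl, hji⟩) h2
              · exact Or.inl rfl
              · rcases h2 with h | ⟨i', j', hi', rfl, hj'⟩
                · exact absurd h (by simp)
                · obtain rfl : j = i' := by injection hi'
                  exact Or.inr ⟨i, j', rfl, rfl, hj'.trans hji⟩
            le_antisymm := by
              rintro u v (rfl | ⟨i, j, rfl, rfl, hji⟩) h2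
              · rcases h2 with rfl | ⟨i, j, _, h, _⟩
                · rfl
                · exact absurd h (by simp)
              · rcases h2 with h | ⟨i', j', hi', hj', hij⟩
                · exact absurd h (by simp)
                · obtain rfl : j = i' := by injection hi'
                  obtain rfl : i = j' := by injection hj'
                  exact congrArg some (le_antisymm hij hji)
            D := fun _ => Set.univ
            D_nonempty := fun _ => ⟨0, trivial⟩
            D_mono := fun _ => le_rfl },
          fun u d => ∃ i, u = some i ∧ i ≤ d,
          fun u => u ≠ none, ?_, ?_, ?_, ?_, ?_, ?_, ?_, ?_, ?_⟩
  · intro u v; rfl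
  · intro w; rfl
  · constructor
    · intro w d _; trivial
    · rintro v w d (rfl | ⟨i, j, rfl, rfl, hji⟩) ⟨k, hk, hkd⟩
      · exact absurd hk (by simp)
      · obtain rfl : i = k := by injection hk
        exact ⟨j, rfl, hji.trans hkd⟩
  · rintro v w (rfl | ⟨i, j, rfl, rfl, _⟩) h
    · exact absurd rfl h
    · simp
  · intro i d
    constructor
    · rintro ⟨k, hk, h⟩
      injection hk with h'
      omega
    · intro h; exact ⟨i, rfl, h⟩
  · rintro d ⟨i, h, _⟩; exact absurd h (by simp)
  · intro u; rfl
  · intro u _ hQ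
    cases u with
    | none => exact absurd rfl hQ
    | some i => exact ⟨i, trivial, i, rfl, le_rfl⟩
  · rintro ⟨d, _, h⟩
    have := h (some (d + 1)) (Or.inl rfl) (by simp)
    obtain ⟨k, hk, hkd⟩ := this
    obtain rfl : d + 1 = k := by injection hk
    omega
end

section
/- For the three-world fork model M with root w1, maximal worlds w2 and w3, constant domain {a, b}, where w1 forces only R(a), w2 forces R(a), R(b), P and w3 forces R(a), R(b), Q, the following homogeneity claim holds: for every first-order formula ψ(x) in the language {P, Q, R} and each maximal world u ∈ {w2, w3}, either u forces both ψ(a) and ψ(b), or u forces neither ψ(a) nor ψ(b). -/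
/-- First-order formulas of a relational language: predicate symbols
(indexed by naturals, of arbitrary arity) applied to variables. -/
inductive RFml : Type
  | rel : ℕ → List ℕ → RFml
  | bot : RFml
  | top : RFml
  | and : RFml → RFml → RFml
  | or : RFml → RFml → RFml
  | imp : RFml → RFml → RFml
  | all : ℕ → RFml → RFml
  | ex : ℕ → RFml → RFml

/-- The variable `x` occurs free in a formula. -/
inductive RFml.FreeIn (x : ℕ) : RFml → Prop
  | rel {r vs} : x ∈ vs → RFml.FreeIn x (.rel r vs)
  | andL {A B} : FreeIn x A → FreeIn x (.and A B)
  | andR {A B} : FreeIn x B → FreeIn x (.and A B)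
  | orL {A B} : FreeIn x A → FreeIn x (.or A B)
  | orR {A B} : FreeIn x B → FreeIn x (.or A B)
  | impL {A B} : FreeIn x A → FreeIn x (.imp A B)
  | impR {A B} : FreeIn x B → FreeIn x (.imp A B)
  | all {y A} : y ≠ x → FreeIn x A → FreeIn x (.all y A)
  | ex {y A} : y ≠ x → FreeIn x A → FreeIn x (.ex y A)

/-- Substitution of the variable `y` for the variable `x`. -/
def RFml.subst (x y : ℕ) : RFml → RFml
  | .rel r vs => .rel r (vs.map fun v => if v = x then y else v)
  | .bot => .bot
  | .top => .top
  | .and A B => .and (A.subst x y) (B.subst x y)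
  | .or A B => .or (A.subst x y) (B.subst x y)
  | .imp A B => .imp (A.subst x y) (B.subst x y)
  | .all z A => if z = x then .all z A else .all z (A.subst x y)
  | .ex z A => if z = x then .ex z A else .ex z (A.subst x y)

/-- Hilbert-style derivability for intuitionistic predicate logic over the
relational language, from an extra set of axioms `L`. -/
inductive RDeriv (L : Set RFml) : RFml → Prop
  | ax {A} : A ∈ L → RDeriv L A
  | impK {A B} : RDeriv L (.imp A (.imp B A))
  | impS {A B C} :
      RDeriv L (.imp (.imp A (.imp B C)) (.imp (.imp A B) (.imp A C)))
  | andI {A B} : RDeriv L (.imp A (.imp B (.and A B)))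
  | andE1 {A B} : RDeriv L (.imp (.and A B) A)
  | andE2 {A B} : RDeriv L (.imp (.and A B) B)
  | orI1 {A B} : RDeriv L (.imp A (.or A B))
  | orI2 {A B} : RDeriv L (.imp B (.or A B))
  | orE {A B C} :
      RDeriv L (.imp (.imp A C) (.imp (.imp B C) (.imp (.or A B) C)))
  | botE {A} : RDeriv L (.imp .bot A)
  | topI : RDeriv L .top
  | allE {x A} (y : ℕ) : RDeriv L (.imp (.all x A) (A.subst x y))
  | exI {x A} (y : ℕ) : RDeriv L (.imp (A.subst x y) (.ex x A))
  | allShift {x A B} : ¬ RFml.FreeIn x B →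
      RDeriv L (.imp (.all x (.imp B A)) (.imp B (.all x A)))
  | exShift {x A B} : ¬ RFml.FreeIn x B →
      RDeriv L (.imp (.all x (.imp A B)) (.imp (.ex x A) B))
  | mp {A B} : RDeriv L (.imp A B) → RDeriv L A → RDeriv L B
  | gen {x A} : RDeriv L A → RDeriv L (.all x A)

/-- The `CD` instance `(∀x (A(x) ∨ B)) → (∀x A(x) ∨ B)`. -/
def CDf (A B : RFml) (x : ℕ) : RFml :=
  .imp (.all x (.or A B)) (.or (.all x A) B)

/-- The `ED` instance `(B → ∃x A(x)) → ∃x (B → A(x))`. -/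
def EDf (A B : RFml) (x : ℕ) : RFml :=
  .imp (.imp B (.ex x A)) (.ex x (.imp B A))

/-- The `SW` instance `(∀x A(x) → B) → ∃x (A(x) → B)`. -/
def SWf (A B : RFml) (x : ℕ) : RFml :=
  .imp (.imp (.all x A) B) (.ex x (.imp A B))

/-- All instances of the quantifier shift principles `CD`, `ED`, `SW`
(with `x` not free in `B`). -/
def QFSAxioms : Set RFml :=
  {G | ∃ A B x, ¬ RFml.FreeIn x B ∧
    (G = CDf A B x ∨ G = EDf A B x ∨ G = SWf A B x)}

/-- The logic `IQC + {CD, ED, SW}`. -/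
def QFSLogic : Set RFml := {A | RDeriv QFSAxioms A}

variable {W U : Type}

/-- A valuation of the predicate symbols on a frame: it respects the domains
and is persistent. -/
def IsValuation (F : KFrame W U) (V : ℕ → W → List U → Prop) : Prop :=
  (∀ r w ds, V r w ds → ∀ d ∈ ds, d ∈ F.D w) ∧
  (∀ r w w' ds, F.le w w' → V r w ds → V r w' ds)

/-- Kripke forcing of a formula at a world, under an environment `e` for the
free variables. -/
def Force (F : KFrame W U) (V : ℕ → W → List U → Prop) :
    RFml → (ℕ → U) → W → Prop
  | .rel r vs, e, w => V r w (vs.map e)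
  | .bot, _, _ => False
  | .top, _, _ => True
  | .and A B, e, w => Force F V A e w ∧ Force F V B e w
  | .or A B, e, w => Force F V A e w ∨ Force F V B e w
  | .imp A B, e, w => ∀ v, F.le w v → Force F V A e v → Force F V B e v
  | .all x A, e, w =>
      ∀ v, F.le w v → ∀ d ∈ F.D v, Force F V A (Function.update e x d) v
  | .ex x A, e, w => ∃ d ∈ F.D w, Force F V A (Function.update e x d) w

/-- Validity of a formula on a frame: it is forced at every world of every
Kripke model based on the frame, under every environment into the domain. -/
def FrameValid (F : KFrame W U) (A : RFml) : Prop :=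
  ∀ V, IsValuation F V → ∀ (w : W) (e : ℕ → U),
    (∀ i, e i ∈ F.D w) → Force F V A e w

/-- For the three-world fork model `M` (root `w₁ = 0`,
maximal worlds `w₂ = 1` and `w₃ = 2`, constant domain `{a, b} = Fin 2` with
`a = 0`, `b = 1`), where `w₁` forces only `R(a)`, `w₂` forces
`R(a), R(b), P` and `w₃` forces `R(a), R(b), Q` (`P = rel 0`, `Q = rel 1`
nullary, `R = rel 2` unary, all other predicates empty), the homogeneity
claim holds: for every formula `ψ(x)` and each maximal world `u ∈ {w₂, w₃}`,
either `u` forces both `ψ(a)` and `ψ(b)`, or it forces neither. -/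
theorem fork_model_homogeneity (F : KFrame (Fin 3) (Fin 2))
    (V : ℕ → Fin 3 → List (Fin 2) → Prop)
    (hle : ∀ u v, F.le u v ↔ (u = v ∨ u = 0))
    (hD : ∀ w, F.D w = Set.univ)
    (hV : ∀ r w ds, V r w ds ↔
      ((r = 0 ∧ ds = [] ∧ w = 1) ∨
       (r = 1 ∧ ds = [] ∧ w = 2) ∨
       (r = 2 ∧ ((w = 0 ∧ ds = [0]) ∨
                 ((w = 1 ∨ w = 2) ∧ (ds = [0] ∨ ds = [1])))))) :
    ∀ (ψ : RFml) (x : ℕ) (e : ℕ → Fin 2) (u : Fin 3), u = 1 ∨ u = 2 →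
      (Force F V ψ (Function.update e x 0) u ∧
       Force F V ψ (Function.update e x 1) u) ∨
      (¬ Force F V ψ (Function.update e x 0) u ∧
       ¬ Force F V ψ (Function.update e x 1) u) := by
  have fin2 : ∀ a : Fin 2, a = 0 ∨ a = 1 := by decide
  have key : ∀ (ψ : RFml) (e e' : ℕ → Fin 2) (u : Fin 3), u = 1 ∨ u = 2 →
      (Force F V ψ e u ↔ Force F V ψ e' u) := by
    intro ψ
    induction ψ with
    | rel r vs =>
      intro e e' u hu
      have hu0 : u ≠ 0 := by rcases hu with h | h <;> simp [h]
      show V r u (vs.map e) ↔ V r u (vs.map e')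
      rw [hV, hV]
      have hnil : (vs.map e = []) ↔ (vs.map e' = []) := by
        simp
      have h01 : (vs.map e = [0] ∨ vs.map e = [1]) ↔
          (vs.map e' = [0] ∨ vs.map e' = [1]) := by
        match vs with
        | [] => simp
        | [v] =>
          simp only [List.map]
          rcases fin2 (e v) with h | h <;> rcases fin2 (e' v) with h' | h' <;>
            simp [h, h']
        | v :: w :: rest => simp
      constructor
      · rintro (⟨h1, h2, h3⟩ | ⟨h1, h2, h3⟩ | ⟨h1, ⟨h2, h3⟩ | ⟨h2, h3⟩⟩)
        · exact Or.inl ⟨h1, hnil.mp h2, h3⟩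
        · exact Or.inr (Or.inl ⟨h1, hnil.mp h2, h3⟩)
        · exact absurd h2 hu0
        · exact Or.inr (Or.inr ⟨h1, Or.inr ⟨h2, h01.mp h3⟩⟩)
      · rintro (⟨h1, h2, h3⟩ | ⟨h1, h2, h3⟩ | ⟨h1, ⟨h2, h3⟩ | ⟨h2, h3⟩⟩)
        · exact Or.inl ⟨h1, hnil.mpr h2, h3⟩
        · exact Or.inr (Or.inl ⟨h1, hnil.mpr h2, h3⟩)
        · exact absurd h2 hu0
        · exact Or.inr (Or.inr ⟨h1, Or.inr ⟨h2, h01.mpr h3⟩⟩)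
    | bot => intro e e' u hu; exact Iff.rfl
    | top => intro e e' u hu; exact Iff.rfl
    | and A B ihA ihB =>
      intro e e' u hu
      exact and_congr (ihA e e' u hu) (ihB e e' u hu)
    | or A B ihA ihB =>
      intro e e' u hu
      exact or_congr (ihA e e' u hu) (ihB e e' u hu)
    | imp A B ihA ihB =>
      intro e e' u hu
      have hu0 : u ≠ 0 := by rcases hu with h | h <;> simp [h]
      have hv : ∀ v, F.le u v ↔ v = u := by
        intro v
        rw [hle]
        constructor
        · rintro (h | h)
          · exact h.symm
          · exact absurd h hu0
        · rintro rfl; exact Or.inl rfl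
      show (∀ v, F.le u v → _) ↔ (∀ v, F.le u v → _)
      constructor
      · intro h v hlev hA
        have hvu := (hv v).mp hlev; subst hvu
        exact (ihB e e' v hu).mp (h v hlev ((ihA e' e v hu).mp hA))
      · intro h v hlev hA
        have hvu := (hv v).mp hlev; subst hvu
        exact (ihB e' e v hu).mp (h v hlev ((ihA e e' v hu).mp hA))
    | all x A ihA =>
      intro e e' u hu
      have hu0 : u ≠ 0 := by rcases hu with h | h <;> simp [h]
      have hv : ∀ v, F.le u v ↔ v = u := by
        intro v
        rw [hle]
        constructor
        · rintro (h | h)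
          · exact h.symm
          · exact absurd h hu0
        · rintro rfl; exact Or.inl rfl
      show (∀ v, F.le u v → _) ↔ (∀ v, F.le u v → _)
      constructor
      · intro h v hlev d hd
        have hvu := (hv v).mp hlev; subst hvu
        exact (ihA (Function.update e x d) (Function.update e' x d) v hu).mp
          (h v hlev d hd)
      · intro h v hlev d hd
        have hvu := (hv v).mp hlev; subst hvu
        exact (ihA (Function.update e' x d) (Function.update e x d) v hu).mp
          (h v hlev d hd)
    | ex x A ihA =>
      intro e e' u hu
      show (∃ d ∈ F.D u, _) ↔ (∃ d ∈ F.D u, _)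
      constructor
      · rintro ⟨d, hd, h⟩
        exact ⟨d, hd,
          (ihA (Function.update e x d) (Function.update e' x d) u hu).mp h⟩
      · rintro ⟨d, hd, h⟩
        exact ⟨d, hd,
          (ihA (Function.update e' x d) (Function.update e x d) u hu).mp h⟩
  intro ψ x e u hu
  by_cases h : Force F V ψ (Function.update e x 0) u
  · exact Or.inl ⟨h,
      (key ψ (Function.update e x 0) (Function.update e x 1) u hu).mp h⟩
  · exact Or.inr ⟨h, fun h' => h
      ((key ψ (Function.update e x 1) (Function.update e x 0) u hu).mp h')⟩
end
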